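/- Let A, A_k be self-adjoint operators on a Hilbert space H whose resolvents R^k_ζ = (ζ − A_k)^{-1} converge strongly to R_ζ = (ζ − A)^{-1} for ζ off the real axis, with the operator-norm lower semicontinuity ‖R_ζ‖ ≤ liminf_k ‖R^k_ζ‖. Then for every λ ∈ σ(A) there exist λ_k ∈ σ(A_k) with λ_k → λ (spectral lower semicontinuity: σ(A) ⊆ lim inf σ(A_k)). -/

import Mathlib

open Filter Metric
open scoped Topology

/-! By the continuous functional calculus, a normal element satisfies
`‖R_ζ‖ = 1 / dist(ζ, σ)`. For `l ∈ σ(A)` (real) and `ζ = l + iδ` this gives `‖R_ζ‖ ≥ 1 / δ`, so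
by lower semicontinuity `‖R^k_ζ‖ > 1 / (2δ)` eventually, i.e. `dist(ζ, σ(A_k)) < 2δ` and
`dist(l, σ(A_k)) < 3δ`. Points of the compact spectra `σ(A_k)` nearest to `l` then converge
to `l`. -/

lemma exists_seq_mem_tendsto_of_tendsto_infDist {X : Type*} [PseudoMetricSpace X]
    {S : ℕ → Set X} (hS : ∀ k, IsCompact (S k)) (hne : ∀ k, (S k).Nonempty) {x : X}
    (h : Tendsto (fun k => infDist x (S k)) atTop (𝓝 0)) :
    ∃ y : ℕ → X, (∀ k, y k ∈ S k) ∧ Tendsto y atTop (𝓝 x) := by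
  choose y hy hdist using fun k => (hS k).exists_infDist_eq_dist (hne k) x
  refine ⟨y, hy, tendsto_iff_dist_tendsto_zero.2 ?_⟩
  simpa only [dist_comm, hdist] using h

section Resolvent

variable {A : Type*} [CStarAlgebra A] {a : A} [IsStarNormal a] {ζ : ℂ}

lemma resolvent_eq_cfc (hζ : ζ ∉ spectrum ℂ a) :
    resolvent a ζ = cfc (fun z => (ζ - z)⁻¹) a := by
  have hne : ∀ z ∈ spectrum ℂ a, ζ - z ≠ 0 := fun z hz =>
    sub_ne_zero.2 (ne_of_mem_of_not_mem hz hζ).symm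
  rw [cfc_inv (fun z => ζ - z) a hne, cfc_sub (fun _ => ζ) (fun z => z) a, cfc_const ζ a,
    cfc_id' ℂ a]
  rfl

lemma inv_dist_le_norm_resolvent {l : ℂ} (hζ : ζ ∉ spectrum ℂ a) (hl : l ∈ spectrum ℂ a) :
    (dist ζ l)⁻¹ ≤ ‖resolvent a ζ‖ := by
  have hne : ∀ z ∈ spectrum ℂ a, ζ - z ≠ 0 := fun z hz =>
    sub_ne_zero.2 (ne_of_mem_of_not_mem hz hζ).symm
  rw [resolvent_eq_cfc hζ, dist_eq_norm, ← norm_inv]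
  exact norm_apply_le_norm_cfc (fun z => (ζ - z)⁻¹) a hl (by fun_prop (disch := assumption))

lemma norm_resolvent_le_inv_infDist (hζ : ζ ∉ spectrum ℂ a) :
    ‖resolvent a ζ‖ ≤ (infDist ζ (spectrum ℂ a))⁻¹ := by
  rw [resolvent_eq_cfc hζ]
  refine norm_cfc_le (inv_nonneg.2 infDist_nonneg) fun l hl => ?_
  have hpos := ((spectrum.isClosed a).notMem_iff_infDist_pos ⟨l, hl⟩).1 hζ
  rw [norm_inv, ← dist_eq_norm]
  exact inv_anti₀ hpos (infDist_le_dist_of_mem hl)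

end Resolvent

lemma eventually_infDist_spectrum_lt_of_inv_lt_liminf {A : Type*} [CStarAlgebra A]
    {a : ℕ → A} [∀ k, IsStarNormal (a k)] {ζ : ℂ} (hζ : ∀ k, ζ ∉ spectrum ℂ (a k)) {r : ℝ}
    (hr₀ : 0 < r) (hr : r⁻¹ < liminf (fun k => ‖resolvent (a k) ζ‖) atTop) :
    ∀ᶠ k in atTop, infDist ζ (spectrum ℂ (a k)) < r := by
  filter_upwards [eventually_lt_of_lt_liminf hr (isBoundedUnder_of ⟨0, fun k => norm_nonneg _⟩)]
    with k hk
  have hinv := hk.trans_le (norm_resolvent_le_inv_infDist (hζ k))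
  rcases (infDist_nonneg (x := ζ) (s := spectrum ℂ (a k))).eq_or_lt with hzero | hpos
  · exact hzero ▸ hr₀
  · exact (inv_lt_inv₀ hr₀ hpos).1 hinv

lemma tendsto_infDist_spectrum_of_norm_resolvent_le_liminf {A : Type*} [CStarAlgebra A]
    {a : ℕ → A} {b : A} (ha : ∀ k, IsSelfAdjoint (a k)) (hb : IsSelfAdjoint b)
    (hlsc : ∀ ζ : ℂ, ζ.im ≠ 0 →
      ‖resolvent b ζ‖ ≤ liminf (fun k => ‖resolvent (a k) ζ‖) atTop)
    {l : ℂ} (hl : l ∈ spectrum ℂ b) :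
    Tendsto (fun k => infDist l (spectrum ℂ (a k))) atTop (𝓝 0) := by
  have : ∀ k, IsStarNormal (a k) := fun k => (ha k).isStarNormal
  have : IsStarNormal b := hb.isStarNormal
  refine tendsto_order.2 ⟨fun e he => .of_forall fun k => he.trans_le infDist_nonneg,
    fun e he => ?_⟩
  set δ := e / 3 with hδ
  have hδ₀ : 0 < δ := by positivity
  set ζ : ℂ := l + δ * Complex.I
  have hζl : dist ζ l = δ := by simp [ζ, dist_eq_norm, abs_of_pos hδ₀]
  have hζ : ζ.im ≠ 0 := by simp [ζ, hb.im_eq_zero_of_mem_spectrum hl, hδ₀.ne']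
  have hliminf : (2 * δ)⁻¹ < liminf (fun k => ‖resolvent (a k) ζ‖) atTop :=
    calc (2 * δ)⁻¹ < δ⁻¹ := by rw [inv_lt_inv₀ (by positivity) hδ₀]; linarith
      _ = (dist ζ l)⁻¹ := by rw [hζl]
      _ ≤ ‖resolvent b ζ‖ :=
        inv_dist_le_norm_resolvent (fun h => hζ (hb.im_eq_zero_of_mem_spectrum h)) hl
      _ ≤ _ := hlsc ζ hζ
  filter_upwards [eventually_infDist_spectrum_lt_of_inv_lt_liminf
    (fun k h => hζ ((ha k).im_eq_zero_of_mem_spectrum h)) (by positivity) hliminf] with k hk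
  calc infDist l (spectrum ℂ (a k)) ≤ infDist ζ (spectrum ℂ (a k)) + dist l ζ :=
        infDist_le_infDist_add_dist
    _ < 2 * δ + δ := by rw [dist_comm, hζl]; linarith
    _ = e := by rw [hδ]; ring

theorem spectrum_lower_semicontinuous_of_resolvent_convergence_general
    (H : Type*) [NormedAddCommGroup H] [InnerProductSpace ℂ H] [CompleteSpace H]
    (A : ℕ → H →L[ℂ] H) (Ainf : H →L[ℂ] H)
    (hA : ∀ k, IsSelfAdjoint (A k)) (hAinf : IsSelfAdjoint Ainf)
    (hlsc : ∀ ζ : ℂ, ζ.im ≠ 0 →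
      ‖resolvent Ainf ζ‖ ≤ liminf (fun k => ‖resolvent (A k) ζ‖) atTop) :
    ∀ l ∈ spectrum ℂ Ainf, ∃ lam : ℕ → ℂ,
      (∀ k, lam k ∈ spectrum ℂ (A k)) ∧ Tendsto lam atTop (𝓝 l) := by
  intro l hl
  have : Nontrivial H := by
    by_contra! hH
    exact spectrum.mem_iff.1 hl (isUnit_of_subsingleton _)
  exact exists_seq_mem_tendsto_of_tendsto_infDist (fun k => spectrum.isCompact (A k))
    (fun k => spectrum.nonempty (A k))
    (tendsto_infDist_spectrum_of_norm_resolvent_le_liminf hA hAinf hlsc hl)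

/-- if the resolvents of self-adjoint operators `A k` converge
strongly off the real axis to those of `A`, with the operator-norm lower
semicontinuity `‖R_ζ‖ ≤ liminf ‖R^k_ζ‖`, then every spectral point of `A` is a
limit of spectral points of the `A k` (spectral lower semicontinuity). -/
theorem spectrum_lower_semicontinuous_of_resolvent_convergence
    (H : Type*) [NormedAddCommGroup H] [InnerProductSpace ℂ H] [CompleteSpace H]
    (A : ℕ → H →L[ℂ] H) (Ainf : H →L[ℂ] H)
    (hA : ∀ k, IsSelfAdjoint (A k)) (hAinf : IsSelfAdjoint Ainf)
    (hstrong : ∀ ζ : ℂ, ζ.im ≠ 0 → ∀ u : H,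
      Tendsto (fun k => resolvent (A k) ζ u) atTop (𝓝 (resolvent Ainf ζ u)))
    (hlsc : ∀ ζ : ℂ, ζ.im ≠ 0 →
      ‖resolvent Ainf ζ‖ ≤ liminf (fun k => ‖resolvent (A k) ζ‖) atTop) :
    ∀ l ∈ spectrum ℂ Ainf, ∃ lam : ℕ → ℂ,
      (∀ k, lam k ∈ spectrum ℂ (A k)) ∧ Tendsto lam atTop (𝓝 l) :=
  spectrum_lower_semicontinuous_of_resolvent_convergence_general H A Ainf hA hAinf hlsc
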